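/- arXiv:2508.09760 — 6 statements merged into one kernel-verified Lean document; each statement's English description precedes it below -/
import Mathlib

section
/- Define H(x) = the value at time T of the solution of the piecewise system u'=-d₁u on (0,τ₁], u'=u(1-u) on (τ₁,τ₂], u'=u(1-u)-c₁u on (τ₂,T], starting from u(0)=x>0, with c₁≠1. Then lim_{x→0⁺} H(x)/x = e^{c₁(τ₂ - τ₂*)}, where τ₂* = ((d₁+1)τ₁ + (c₁-1)T)/c₁. -/
/-!
The first phase is linear, so `u τ₁ = x e^{-d₁τ₁}`. Both logistic phases read `u' = (r - u) u`
with `r = 1`, resp. `r = 1 - c₁ ≤ 1`, so Grönwall-type comparison gives the a priori bound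
`u t ≤ u τ₁ e^{t - τ₁} ≤ M := u τ₁ e^{T - τ₁} = O(x)` on `[τ₁, T]`, and then
`(r - M) u ≤ u' ≤ r u`. Hence the time-`T` map is squeezed between `x e^{E - K x}` and `x e^E`,
where `E = -d₁τ₁ + (τ₂ - τ₁) + (1 - c₁)(T - τ₂) = c₁(τ₂ - τ₂*)` is the growth exponent of the
system linearised at `0`.
-/

open Real Set Filter Topology

section Comparison

variable {u f : ℝ → ℝ} {K a b : ℝ}

theorem le_mul_exp_of_hasDerivWithinAt_le
    (hu : ∀ t ∈ Icc a b, HasDerivWithinAt u (f t) (Icc a b) t)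
    (hf : ∀ t ∈ Icc a b, f t ≤ K * u t) :
    ∀ t ∈ Icc a b, u t ≤ u a * exp (K * (t - a)) := by
  intro t ht
  have hanti : AntitoneOn (fun s => u s * exp (-K * s)) (Icc a b) := by
    have hexp : ∀ s, HasDerivAt (fun s => exp (-K * s)) (exp (-K * s) * -K) s := fun s => by
      simpa using ((hasDerivAt_id s).const_mul (-K)).exp
    refine antitoneOn_of_hasDerivWithinAt_nonpos (convex_Icc a b)
      (fun s hs => (hu s hs).continuousWithinAt.mul (hexp s).continuousAt.continuousWithinAt)
      (fun s hs => ((hu s (interior_subset hs)).mul (hexp s).hasDerivWithinAt).mono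
        interior_subset) fun s hs => ?_
    have := hf s (interior_subset hs)
    nlinarith [exp_pos (-K * s)]
  have key := hanti (left_mem_Icc.2 (ht.1.trans ht.2)) ht ht.1
  calc u t = u t * exp (-K * t) * exp (K * t) := by rw [mul_assoc, ← exp_add]; simp
    _ ≤ u a * exp (-K * a) * exp (K * t) := by gcongr
    _ = u a * exp (K * (t - a)) := by rw [mul_assoc, ← exp_add]; ring_nf

theorem mul_exp_le_of_le_hasDerivWithinAt
    (hu : ∀ t ∈ Icc a b, HasDerivWithinAt u (f t) (Icc a b) t)
    (hf : ∀ t ∈ Icc a b, K * u t ≤ f t) :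
    ∀ t ∈ Icc a b, u a * exp (K * (t - a)) ≤ u t := by
  intro t ht
  have := le_mul_exp_of_hasDerivWithinAt_le (u := -u) (f := -f) (K := K)
    (fun s hs => (hu s hs).neg) (fun s hs => by simpa using hf s hs) t ht
  simpa using this

theorem eq_mul_exp_of_hasDerivWithinAt (hab : a ≤ b)
    (hu : ∀ t ∈ Icc a b, HasDerivWithinAt u (K * u t) (Icc a b) t) :
    u b = u a * exp (K * (b - a)) :=
  le_antisymm (le_mul_exp_of_hasDerivWithinAt_le hu (fun _ _ => le_rfl) b ⟨hab, le_rfl⟩)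
    (mul_exp_le_of_le_hasDerivWithinAt hu (fun _ _ => le_rfl) b ⟨hab, le_rfl⟩)

end Comparison

section Logistic

variable {u : ℝ → ℝ} {a m b c M : ℝ}

theorem le_mul_exp_of_logistic
    (hu : ∀ t ∈ Icc a b, HasDerivWithinAt u (u t * (1 - u t) - c * u t) (Icc a b) t) :
    ∀ t ∈ Icc a b, u t ≤ u a * exp ((1 - c) * (t - a)) :=
  le_mul_exp_of_hasDerivWithinAt_le hu fun t _ => by nlinarith [sq_nonneg (u t)]

theorem mul_exp_le_of_logistic
    (hu : ∀ t ∈ Icc a b, HasDerivWithinAt u (u t * (1 - u t) - c * u t) (Icc a b) t)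
    (hpos : ∀ t ∈ Icc a b, 0 ≤ u t) (hM : ∀ t ∈ Icc a b, u t ≤ M) :
    ∀ t ∈ Icc a b, u a * exp ((1 - c - M) * (t - a)) ≤ u t :=
  mul_exp_le_of_le_hasDerivWithinAt hu fun t ht => by nlinarith [hpos t ht, hM t ht]

theorem le_mul_exp_sub_of_logistic_switch (ham : a ≤ m) (hc : 0 ≤ c)
    (h₁ : ∀ t ∈ Icc a m, HasDerivWithinAt u (u t * (1 - u t)) (Icc a m) t)
    (h₂ : ∀ t ∈ Icc m b, HasDerivWithinAt u (u t * (1 - u t) - c * u t) (Icc m b) t)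
    (hpos : ∀ t ∈ Icc a b, 0 ≤ u t) :
    ∀ t ∈ Icc a b, u t ≤ u a * exp (t - a) := by
  have h₁' := le_mul_exp_of_logistic (c := 0) fun t ht => (h₁ t ht).congr_deriv (by ring)
  rintro t ⟨hat, htb⟩
  rcases le_total t m with htm | hmt
  · simpa using h₁' t ⟨hat, htm⟩
  · have h₂' := le_mul_exp_of_hasDerivWithinAt_le (K := 1) h₂ fun s hs => by
      nlinarith [hpos s ⟨ham.trans hs.1, hs.2⟩, sq_nonneg (u s)]
    calc u t ≤ u m * exp (1 * (t - m)) := h₂' t ⟨hmt, htb⟩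
      _ ≤ u a * exp ((1 - 0) * (m - a)) * exp (1 * (t - m)) := by
        gcongr; exact h₁' m ⟨ham, le_rfl⟩
      _ = u a * exp (t - a) := by rw [mul_assoc, ← exp_add]; ring_nf

theorem le_mul_exp_of_logistic_switch (ham : a ≤ m) (hmb : m ≤ b)
    (h₁ : ∀ t ∈ Icc a m, HasDerivWithinAt u (u t * (1 - u t)) (Icc a m) t)
    (h₂ : ∀ t ∈ Icc m b, HasDerivWithinAt u (u t * (1 - u t) - c * u t) (Icc m b) t) :
    u b ≤ u a * exp ((m - a) + (1 - c) * (b - m)) := by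
  have h₁' := le_mul_exp_of_logistic (c := 0) fun t ht => (h₁ t ht).congr_deriv (by ring)
  calc u b ≤ u m * exp ((1 - c) * (b - m)) := le_mul_exp_of_logistic h₂ b ⟨hmb, le_rfl⟩
    _ ≤ u a * exp ((1 - 0) * (m - a)) * exp ((1 - c) * (b - m)) := by
      gcongr; exact h₁' m ⟨ham, le_rfl⟩
    _ = u a * exp ((m - a) + (1 - c) * (b - m)) := by rw [mul_assoc, ← exp_add]; ring_nf

theorem mul_exp_le_of_logistic_switch (ham : a ≤ m) (hmb : m ≤ b) (hc : 0 ≤ c)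
    (h₁ : ∀ t ∈ Icc a m, HasDerivWithinAt u (u t * (1 - u t)) (Icc a m) t)
    (h₂ : ∀ t ∈ Icc m b, HasDerivWithinAt u (u t * (1 - u t) - c * u t) (Icc m b) t)
    (hpos : ∀ t ∈ Icc a b, 0 ≤ u t) :
    u a * exp ((m - a) + (1 - c) * (b - m) - u a * exp (b - a) * (b - a)) ≤ u b := by
  set M := u a * exp (b - a)
  have hM : ∀ t ∈ Icc a b, u t ≤ M := fun t ht =>
    (le_mul_exp_sub_of_logistic_switch ham hc h₁ h₂ hpos t ht).trans <|
      mul_le_mul_of_nonneg_left (exp_le_exp.2 (by linarith [ht.2]))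
        (hpos a ⟨le_rfl, ham.trans hmb⟩)
  have h₁' := mul_exp_le_of_logistic (c := 0) (M := M)
    (fun t ht => (h₁ t ht).congr_deriv (by ring))
    (fun t ht => hpos t ⟨ht.1, ht.2.trans hmb⟩) (fun t ht => hM t ⟨ht.1, ht.2.trans hmb⟩)
  have h₂' := mul_exp_le_of_logistic (M := M) h₂
    (fun t ht => hpos t ⟨ham.trans ht.1, ht.2⟩) (fun t ht => hM t ⟨ham.trans ht.1, ht.2⟩)
  calc u a * exp ((m - a) + (1 - c) * (b - m) - M * (b - a))
      = u a * exp ((1 - 0 - M) * (m - a)) * exp ((1 - c - M) * (b - m)) := by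
        rw [mul_assoc (u a) (exp _) (exp _), ← exp_add]; ring_nf
    _ ≤ u m * exp ((1 - c - M) * (b - m)) := by gcongr; exact h₁' m ⟨ham, le_rfl⟩
    _ ≤ u b := h₂' b ⟨hmb, le_rfl⟩

end Logistic

theorem tendsto_div_nhdsGT_zero_of_mul_exp_bounds {H : ℝ → ℝ} {E K : ℝ}
    (h : ∀ x, 0 < x → x * exp (E - x * K) ≤ H x ∧ H x ≤ x * exp E) :
    Tendsto (fun x => H x / x) (𝓝[>] 0) (𝓝 (exp E)) := by
  have hlow : Tendsto (fun x => exp (E - x * K)) (𝓝[>] 0) (𝓝 (exp E)) := by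
    have : Continuous fun x => exp (E - x * K) := by fun_prop
    simpa using (this.tendsto 0).mono_left nhdsWithin_le_nhds
  refine tendsto_of_tendsto_of_tendsto_of_le_of_le' hlow tendsto_const_nhds ?_ ?_ <;>
    filter_upwards [self_mem_nhdsWithin] with x (hx : 0 < x)
  · rw [le_div_iff₀ hx, mul_comm]; exact (h x hx).1
  · rw [div_le_iff₀ hx, mul_comm]; exact (h x hx).2

theorem stmt_4_general (d₁ c₁ τ₁ τ₂ T : ℝ) (hc : 0 < c₁)
    (hτ₁ : 0 < τ₁) (hτ₁₂ : τ₁ ≤ τ₂) (hτ₂T : τ₂ ≤ T)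
    (H : ℝ → ℝ)
    (hH : ∀ x, 0 < x → ∃ u : ℝ → ℝ,
      u 0 = x ∧ (∀ t ∈ Icc (0:ℝ) T, 0 < u t) ∧
      (∀ t ∈ Icc (0:ℝ) τ₁, HasDerivWithinAt u (-d₁ * u t) (Icc (0:ℝ) τ₁) t) ∧
      (∀ t ∈ Icc τ₁ τ₂, HasDerivWithinAt u (u t * (1 - u t)) (Icc τ₁ τ₂) t) ∧
      (∀ t ∈ Icc τ₂ T, HasDerivWithinAt u (u t * (1 - u t) - c₁ * u t) (Icc τ₂ T) t) ∧
      H x = u T) :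
    Tendsto (fun x => H x / x) (nhdsWithin 0 (Ioi 0))
      (nhds (Real.exp (c₁ * (τ₂ - ((d₁ + 1) * τ₁ + (c₁ - 1) * T) / c₁)))) := by
  set F := (τ₂ - τ₁) + (1 - c₁) * (T - τ₂)
  have hE : c₁ * (τ₂ - ((d₁ + 1) * τ₁ + (c₁ - 1) * T) / c₁) = -d₁ * τ₁ + F := by
    field_simp; ring
  rw [hE]
  set K := exp (-d₁ * τ₁) * exp (T - τ₁) * (T - τ₁)
  refine tendsto_div_nhdsGT_zero_of_mul_exp_bounds (K := K) fun x hx => ?_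
  obtain ⟨u, hu0, hpos, h₀, h₁, h₂, hHx⟩ := hH x hx
  have hu₁ : u τ₁ = x * exp (-d₁ * τ₁) := by
    simpa [hu0] using eq_mul_exp_of_hasDerivWithinAt hτ₁.le h₀
  have hpos' : ∀ t ∈ Icc τ₁ T, 0 ≤ u t := fun t ht => (hpos t ⟨hτ₁.le.trans ht.1, ht.2⟩).le
  have hexp : -d₁ * τ₁ + F - x * K = -d₁ * τ₁ + (F - u τ₁ * exp (T - τ₁) * (T - τ₁)) := by
    rw [hu₁]; ring
  rw [hHx, hexp]
  constructor
  · calc x * exp (-d₁ * τ₁ + (F - u τ₁ * exp (T - τ₁) * (T - τ₁)))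
        = u τ₁ * exp (F - u τ₁ * exp (T - τ₁) * (T - τ₁)) := by
          rw [exp_add, ← mul_assoc, ← hu₁]
      _ ≤ u T := mul_exp_le_of_logistic_switch hτ₁₂ hτ₂T hc.le h₁ h₂ hpos'
  · calc u T ≤ u τ₁ * exp F := le_mul_exp_of_logistic_switch hτ₁₂ hτ₂T h₁ h₂
      _ = x * exp (-d₁ * τ₁ + F) := by rw [exp_add (-d₁ * τ₁), ← mul_assoc, ← hu₁]

/-- For H(x) the time-T map of the piecewise system u'=-d₁u on (0,τ₁],
u'=u(1-u) on (τ₁,τ₂], u'=u(1-u)-c₁u on (τ₂,T], with c₁ ≠ 1,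
lim_{x→0⁺} H(x)/x = e^{c₁(τ₂-τ₂*)} with τ₂* = ((d₁+1)τ₁+(c₁-1)T)/c₁. -/
theorem stmt_4 (d₁ c₁ τ₁ τ₂ T : ℝ) (hd : 0 < d₁) (hc : 0 < c₁) (hc1 : c₁ ≠ 1)
    (hτ₁ : 0 < τ₁) (hτ₁₂ : τ₁ ≤ τ₂) (hτ₂T : τ₂ ≤ T)
    (H : ℝ → ℝ)
    (hH : ∀ x, 0 < x → ∃ u : ℝ → ℝ,
      u 0 = x ∧ (∀ t ∈ Icc (0:ℝ) T, 0 < u t) ∧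
      (∀ t ∈ Icc (0:ℝ) τ₁, HasDerivWithinAt u (-d₁ * u t) (Icc (0:ℝ) τ₁) t) ∧
      (∀ t ∈ Icc τ₁ τ₂, HasDerivWithinAt u (u t * (1 - u t)) (Icc τ₁ τ₂) t) ∧
      (∀ t ∈ Icc τ₂ T, HasDerivWithinAt u (u t * (1 - u t) - c₁ * u t) (Icc τ₂ T) t) ∧
      H x = u T) :
    Tendsto (fun x => H x / x) (nhdsWithin 0 (Ioi 0))
      (nhds (Real.exp (c₁ * (τ₂ - ((d₁ + 1) * τ₁ + (c₁ - 1) * T) / c₁)))) :=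
  stmt_4_general d₁ c₁ τ₁ τ₂ T hc hτ₁ hτ₁₂ hτ₂T H hH
end

section
/- For the piecewise-defined Poincaré map H (time-T map of the system u'=-d₁u on dry season, u'=u(1-u) on growth season, u'=u(1-u)-c₁u on grazing season), if the initial value x ≥ 1 then H(x) < x. -/
/-!
In the dry season `u' = -d₁ u < 0`, so `u` drops strictly below `x`. The two remaining
seasons are logistic, `u' = u (a - u)` with `a = 1` and `a = 1 - c₁`, both `≤ x`. For such
an equation `(1 / u - 1 / M) e^{a t}` has derivative `e^{a t} (1 - a / M) ≥ 0` whenever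
`a ≤ M`, so the level `M = x` can never be reached again from below.
-/

open Real Set

variable {D : Set ℝ} {u : ℝ → ℝ}

lemma strictAntiOn_of_linear_decay (hD : Convex ℝ D) {d : ℝ} (hd : 0 < d)
    (hpos : ∀ r ∈ D, 0 < u r) (hu : ∀ r ∈ D, HasDerivWithinAt u (-d * u r) D r) :
    StrictAntiOn u D :=
  strictAntiOn_of_hasDerivWithinAt_neg hD (fun r hr => (hu r hr).continuousWithinAt)
    (fun r hr => (hu r (interior_subset hr)).mono interior_subset)
    (fun r hr => by nlinarith [hpos r (interior_subset hr)])

lemma monotoneOn_logistic_gap (hD : Convex ℝ D) {a M : ℝ} (hM : 0 < M) (haM : a ≤ M)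
    (hpos : ∀ r ∈ D, 0 < u r) (hu : ∀ r ∈ D, HasDerivWithinAt u (u r * (a - u r)) D r) :
    MonotoneOn (fun r => ((u r)⁻¹ - M⁻¹) * exp (a * r)) D := by
  have hderiv : ∀ r ∈ D, HasDerivWithinAt (fun r => ((u r)⁻¹ - M⁻¹) * exp (a * r))
      (exp (a * r) * (1 - a / M)) D r := by
    intro r hr
    have hur := (hpos r hr).ne'
    have hexp : HasDerivAt (fun y => exp (a * y)) (exp (a * r) * a) r :=
      ((hasDerivAt_id r).const_mul a).exp.congr_deriv (by simp)
    refine ((((hu r hr).inv hur).sub_const M⁻¹).mul hexp.hasDerivWithinAt).congr_deriv ?_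
    rw [Pi.inv_apply]
    field_simp
    ring
  refine monotoneOn_of_hasDerivWithinAt_nonneg hD (fun r hr => (hderiv r hr).continuousWithinAt)
    (fun r hr => (hderiv r (interior_subset hr)).mono interior_subset) (fun r _ => ?_)
  have : 0 ≤ 1 - a / M := sub_nonneg.2 ((div_le_one hM).2 haM)
  positivity

lemma logistic_lt_of_lt (hD : Convex ℝ D) {a M s t : ℝ} (hs : s ∈ D) (ht : t ∈ D)
    (hst : s ≤ t) (haM : a ≤ M) (hus : u s < M)
    (hpos : ∀ r ∈ D, 0 < u r) (hu : ∀ r ∈ D, HasDerivWithinAt u (u r * (a - u r)) D r) :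
    u t < M := by
  have hM : 0 < M := (hpos s hs).trans hus
  have hgap_s : 0 < ((u s)⁻¹ - M⁻¹) * exp (a * s) :=
    mul_pos (sub_pos.2 (inv_strictAnti₀ (hpos s hs) hus)) (exp_pos _)
  have hgap_t : 0 < (u t)⁻¹ - M⁻¹ :=
    pos_of_mul_pos_left (hgap_s.trans_le (monotoneOn_logistic_gap hD hM haM hpos hu hs ht hst))
      (exp_pos _).le
  exact (inv_lt_inv₀ hM (hpos t ht)).1 (sub_pos.1 hgap_t)

/-- If the initial value x ≥ 1, then the time-T map of the three-season single
species system satisfies H(x) < x. -/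
theorem stmt_6 (d₁ c₁ τ₁ τ₂ T : ℝ) (hd : 0 < d₁) (hc : 0 < c₁)
    (hτ₁ : 0 < τ₁) (hτ₁₂ : τ₁ < τ₂) (hτ₂T : τ₂ ≤ T)
    (x : ℝ) (hx : 1 ≤ x) (u : ℝ → ℝ) (h0 : u 0 = x)
    (hpos : ∀ t ∈ Icc (0:ℝ) T, 0 < u t)
    (hu1 : ∀ t ∈ Icc (0:ℝ) τ₁, HasDerivWithinAt u (-d₁ * u t) (Icc (0:ℝ) τ₁) t)
    (hu2 : ∀ t ∈ Icc τ₁ τ₂, HasDerivWithinAt u (u t * (1 - u t)) (Icc τ₁ τ₂) t)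
    (hu3 : ∀ t ∈ Icc τ₂ T, HasDerivWithinAt u (u t * (1 - u t) - c₁ * u t) (Icc τ₂ T) t) :
    u T < x := by
  have hpos_on : ∀ {a b : ℝ}, 0 ≤ a → b ≤ T → ∀ r ∈ Icc a b, 0 < u r :=
    fun ha hb r hr => hpos r (Icc_subset_Icc ha hb hr)
  have hdry : u τ₁ < x := h0 ▸
    strictAntiOn_of_linear_decay (convex_Icc 0 τ₁) hd (hpos_on le_rfl (by linarith)) hu1
      (left_mem_Icc.2 hτ₁.le) (right_mem_Icc.2 hτ₁.le) hτ₁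
  have hgrowth : u τ₂ < x :=
    logistic_lt_of_lt (convex_Icc τ₁ τ₂) (left_mem_Icc.2 hτ₁₂.le) (right_mem_Icc.2 hτ₁₂.le)
      hτ₁₂.le hx hdry (hpos_on hτ₁.le hτ₂T) hu2
  exact logistic_lt_of_lt (convex_Icc τ₂ T) (left_mem_Icc.2 hτ₂T) (right_mem_Icc.2 hτ₂T)
    hτ₂T (a := 1 - c₁) (by linarith) hgrowth (hpos_on (by linarith) le_rfl)
    (fun r hr => (hu3 r hr).congr_deriv (by ring))
end

section
/- In the case c₁ = 1: with m₁ = e^{-d₁τ₁} and m₂ = e^{τ₂-τ₁}, the full Poincaré map is H(x) = m₁m₂x / (m₁m₂(T-τ₂)x + m₁(m₂-1)x + 1) for x ∈ (0,1). Consequently, if m₁m₂ ≤ 1 (i.e. τ₂ ≤ (d₁+1)τ₁), then H(x) < x for all x ∈ (0,1). -/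
/-!
On each of the three phases the equation is of Bernoulli type `u' = u (α - β u)`, which the
substitution `u ρ = u(a) e^{α (t - a)}`, with `ρ' = β u(a) e^{α (t - a)}`, linearises: the defect
`u ρ - u(a) e^{α (t - a)}` solves a linear equation with zero initial value, so it vanishes by
Grönwall. Composing the three explicit flows gives the Möbius map `H`, whose denominator exceeds
`1` while its numerator coefficient `m₁ m₂` is at most `1`.
-/

open Real Set

theorem eqOn_zero_of_hasDerivWithinAt_mul_self {g k : ℝ → ℝ} {a b : ℝ}
    (hk : ContinuousOn k (Icc a b))
    (hg : ∀ t ∈ Icc a b, HasDerivWithinAt g (k t * g t) (Icc a b) t) (ha : g a = 0) :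
    ∀ t ∈ Icc a b, g t = 0 := by
  obtain ⟨K, hK⟩ := isCompact_Icc.exists_bound_of_continuousOn hk
  refine eq_zero_of_abs_deriv_le_mul_abs_self_of_eq_zero_right (K := K)
    (fun t ht => (hg t ht).continuousWithinAt)
    (fun t ht => (hg t (Ico_subset_Icc_self ht)).mono_of_mem_nhdsWithin
      (Icc_mem_nhdsGE_of_mem ht)) ha fun t ht => ?_
  rw [norm_mul]
  exact mul_le_mul_of_nonneg_right (hK t (Ico_subset_Icc_self ht)) (norm_nonneg _)

theorem mul_eq_exp_of_hasDerivWithinAt_bernoulli {u ρ : ℝ → ℝ} {a b α β : ℝ}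
    (hu : ∀ t ∈ Icc a b, HasDerivWithinAt u (u t * (α - β * u t)) (Icc a b) t)
    (hρa : ρ a = 1) (hρ : ∀ t, HasDerivAt ρ (β * u a * exp (α * (t - a))) t) :
    ∀ t ∈ Icc a b, u t * ρ t = u a * exp (α * (t - a)) := by
  have hexp (t : ℝ) : HasDerivAt (fun t => u a * exp (α * (t - a)))
      (u a * (exp (α * (t - a)) * α)) t :=
    ((((hasDerivAt_id t).sub_const a).const_mul α).exp.const_mul (u a)).congr_deriv
      (by simp)
  have hk : ContinuousOn (fun t => α - β * u t) (Icc a b) :=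
    continuousOn_const.sub
      (continuousOn_const.mul fun t ht => (hu t ht).continuousWithinAt)
  have hdefect := eqOn_zero_of_hasDerivWithinAt_mul_self hk
    (g := fun t => u t * ρ t - u a * exp (α * (t - a)))
    (fun t ht => (((hu t ht).mul (hρ t).hasDerivWithinAt).sub
      (hexp t).hasDerivWithinAt).congr_deriv (by ring))
    (by simp [hρa])
  exact fun t ht => sub_eq_zero.mp (hdefect t ht)

theorem eq_mul_exp_of_hasDerivWithinAt_linear {u : ℝ → ℝ} {a b α : ℝ}
    (hu : ∀ t ∈ Icc a b, HasDerivWithinAt u (α * u t) (Icc a b) t) :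
    ∀ t ∈ Icc a b, u t = u a * exp (α * (t - a)) := by
  simpa using mul_eq_exp_of_hasDerivWithinAt_bernoulli (ρ := fun _ => 1) (β := 0)
    (fun t ht => (hu t ht).congr_deriv (by ring)) rfl fun t => by
      simpa using hasDerivAt_const t (1 : ℝ)

theorem mul_eq_exp_of_hasDerivWithinAt_logistic {u : ℝ → ℝ} {a b : ℝ}
    (hu : ∀ t ∈ Icc a b, HasDerivWithinAt u (u t * (1 - u t)) (Icc a b) t) :
    ∀ t ∈ Icc a b, u t * (1 + u a * (exp (t - a) - 1)) = u a * exp (t - a) := by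
  simpa using mul_eq_exp_of_hasDerivWithinAt_bernoulli (α := 1) (β := 1)
    (ρ := fun t => 1 + u a * (exp (t - a) - 1))
    (fun t ht => (hu t ht).congr_deriv (by ring)) (by simp) fun t =>
      (((((hasDerivAt_id t).sub_const a).exp.sub_const 1).const_mul (u a)).const_add
        1).congr_deriv (by simp)

theorem mul_eq_of_hasDerivWithinAt_neg_sq {u : ℝ → ℝ} {a b : ℝ}
    (hu : ∀ t ∈ Icc a b, HasDerivWithinAt u (-(u t) ^ 2) (Icc a b) t) :
    ∀ t ∈ Icc a b, u t * (1 + u a * (t - a)) = u a := by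
  simpa using mul_eq_exp_of_hasDerivWithinAt_bernoulli (α := 0) (β := 1)
    (ρ := fun t => 1 + u a * (t - a))
    (fun t ht => (hu t ht).congr_deriv (by ring)) (by simp) fun t =>
      ((((hasDerivAt_id t).sub_const a).const_mul (u a)).const_add 1).congr_deriv (by simp)

theorem stmt_11_general (d₁ τ₁ τ₂ T x : ℝ) (hτ₁ : 0 < τ₁) (hτ₁₂ : τ₁ < τ₂)
    (hτ₂T : τ₂ ≤ T) (hx : x ∈ Ioo (0:ℝ) 1) (u : ℝ → ℝ) (h0 : u 0 = x)
    (hu1 : ∀ t ∈ Icc (0:ℝ) τ₁, HasDerivWithinAt u (-d₁ * u t) (Icc (0:ℝ) τ₁) t)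
    (hu2 : ∀ t ∈ Icc τ₁ τ₂, HasDerivWithinAt u (u t * (1 - u t)) (Icc τ₁ τ₂) t)
    (hu3 : ∀ t ∈ Icc τ₂ T, HasDerivWithinAt u (-(u t) ^ 2) (Icc τ₂ T) t) :
    u T = Real.exp (-d₁ * τ₁) * Real.exp (τ₂ - τ₁) * x /
        (Real.exp (-d₁ * τ₁) * Real.exp (τ₂ - τ₁) * (T - τ₂) * x +
          Real.exp (-d₁ * τ₁) * (Real.exp (τ₂ - τ₁) - 1) * x + 1) ∧
      (Real.exp (-d₁ * τ₁) * Real.exp (τ₂ - τ₁) ≤ 1 → u T < x) := by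
  obtain ⟨hx0, -⟩ := hx
  have hu₁ := eq_mul_exp_of_hasDerivWithinAt_linear hu1 τ₁ ⟨hτ₁.le, le_rfl⟩
  have hu₂ := mul_eq_exp_of_hasDerivWithinAt_logistic hu2 τ₂ ⟨hτ₁₂.le, le_rfl⟩
  have hu₃ := mul_eq_of_hasDerivWithinAt_neg_sq hu3 T ⟨hτ₂T, le_rfl⟩
  rw [h0, sub_zero, mul_comm] at hu₁
  rw [hu₁] at hu₂
  set m₁ := exp (-d₁ * τ₁)
  set m₂ := exp (τ₂ - τ₁)
  set D := m₁ * m₂ * (T - τ₂) * x + m₁ * (m₂ - 1) * x + 1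
  have hD : 1 < D := by
    have hm₂ : 1 < m₂ := one_lt_exp_iff.mpr (sub_pos.mpr hτ₁₂)
    have hlast : 0 ≤ m₁ * m₂ * (T - τ₂) * x :=
      mul_nonneg (mul_nonneg (mul_pos (exp_pos _) (exp_pos _)).le (sub_nonneg.mpr hτ₂T)) hx0.le
    have hlogistic : 0 < m₁ * (m₂ - 1) * x := mul_pos (mul_pos (exp_pos _) (sub_pos.mpr hm₂)) hx0
    linarith
  have hH : u T = m₁ * m₂ * x / D := by
    refine eq_div_of_mul_eq (zero_lt_one.trans hD).ne' ?_
    linear_combination (1 + m₁ * x * (m₂ - 1)) * hu₃ + (1 - (T - τ₂) * u T) * hu₂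
  refine ⟨hH, fun hm => ?_⟩
  calc u T = m₁ * m₂ * x / D := hH
    _ ≤ x / D := by gcongr; exact mul_le_of_le_one_left hx0.le hm
    _ < x := div_lt_self hx0 hD

/-- In the case c₁ = 1, with m₁ = e^{-d₁τ₁} and m₂ = e^{τ₂-τ₁}, the full Poincaré
map satisfies H(x) = m₁m₂x/(m₁m₂(T-τ₂)x + m₁(m₂-1)x + 1) for x ∈ (0,1); consequently
if m₁m₂ ≤ 1 then H(x) < x. -/
theorem stmt_11 (d₁ τ₁ τ₂ T x : ℝ) (hd : 0 < d₁) (hτ₁ : 0 < τ₁) (hτ₁₂ : τ₁ < τ₂)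
    (hτ₂T : τ₂ ≤ T) (hx : x ∈ Ioo (0:ℝ) 1) (u : ℝ → ℝ) (h0 : u 0 = x)
    (hu1 : ∀ t ∈ Icc (0:ℝ) τ₁, HasDerivWithinAt u (-d₁ * u t) (Icc (0:ℝ) τ₁) t)
    (hu2 : ∀ t ∈ Icc τ₁ τ₂, HasDerivWithinAt u (u t * (1 - u t)) (Icc τ₁ τ₂) t)
    (hu3 : ∀ t ∈ Icc τ₂ T, HasDerivWithinAt u (-(u t) ^ 2) (Icc τ₂ T) t) :
    u T = Real.exp (-d₁ * τ₁) * Real.exp (τ₂ - τ₁) * x /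
        (Real.exp (-d₁ * τ₁) * Real.exp (τ₂ - τ₁) * (T - τ₂) * x +
          Real.exp (-d₁ * τ₁) * (Real.exp (τ₂ - τ₁) - 1) * x + 1) ∧
      (Real.exp (-d₁ * τ₁) * Real.exp (τ₂ - τ₁) ≤ 1 → u T < x) :=
  stmt_11_general d₁ τ₁ τ₂ T x hτ₁ hτ₁₂ hτ₂T hx u h0 hu1 hu2 hu3
end

section
/- Integral identity for a T-periodic solution: if u* is a positive T-periodic solution of the piecewise system u'=-d₁u on (0,τ₁], u'=u(1-u) on (τ₁,τ₂], u'=u(1-u)-c₁u on (τ₂,T], with phases u₁*, u₂*, u₃*, then ∫₀^{τ₂-τ₁} u₂*(t) dt + ∫₀^{T-τ₂} u₃*(t) dt = (1-c₁)T + c₁τ₂ - (1+d₁)τ₁. -/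
/-!
On each phase the equation has the form `u' = F u`, so `(log u)' = F` and `∫ F` is the
increment of `log u` over the phase. Summing over the three phases, the increments
telescope to `log u T - log u 0 = 0` by periodicity, and the integrals of `F` are
`-d₁ τ₁`, `(τ₂ - τ₁) - ∫ u₂*` and `(1 - c₁)(T - τ₂) - ∫ u₃*`.
-/

open Real Set

theorem integral_eq_log_sub_log_of_hasDerivWithinAt_mul {a b : ℝ} (hab : a ≤ b) {u F : ℝ → ℝ}
    (hpos : ∀ t ∈ Icc a b, 0 < u t) (hF : IntervalIntegrable F MeasureTheory.volume a b)
    (hu : ∀ t ∈ Icc a b, HasDerivWithinAt u (F t * u t) (Icc a b) t) :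
    ∫ t in a..b, F t = log (u b) - log (u a) := by
  have hlog_cont : ContinuousOn (fun t => log (u t)) (Icc a b) :=
    ContinuousOn.log (fun t ht => (hu t ht).continuousWithinAt) fun t ht => (hpos t ht).ne'
  refine intervalIntegral.integral_eq_sub_of_hasDeriv_right_of_le hab hlog_cont
    (fun t ht => ?_) hF
  have ht' : t ∈ Icc a b := Ioo_subset_Icc_self ht
  have hlog := ((hu t ht').hasDerivAt (Icc_mem_nhds ht.1 ht.2)).log (hpos t ht').ne'
  rw [mul_div_cancel_right₀ _ (hpos t ht').ne'] at hlog
  exact hlog.hasDerivWithinAt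

theorem log_sub_log_of_hasDerivWithinAt_const_mul {a b d : ℝ} (hab : a ≤ b) {u : ℝ → ℝ}
    (hpos : ∀ t ∈ Icc a b, 0 < u t)
    (hu : ∀ t ∈ Icc a b, HasDerivWithinAt u (d * u t) (Icc a b) t) :
    log (u b) - log (u a) = d * (b - a) := by
  rw [← integral_eq_log_sub_log_of_hasDerivWithinAt_mul hab hpos intervalIntegrable_const hu,
    intervalIntegral.integral_const, smul_eq_mul, mul_comm]

theorem integral_eq_of_hasDerivWithinAt_logistic {a b r : ℝ} (hab : a ≤ b) {u : ℝ → ℝ}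
    (hpos : ∀ t ∈ Icc a b, 0 < u t)
    (hu : ∀ t ∈ Icc a b, HasDerivWithinAt u (u t * (r - u t)) (Icc a b) t) :
    ∫ t in (0 : ℝ)..(b - a), u (a + t) = r * (b - a) - (log (u b) - log (u a)) := by
  have hu_int : IntervalIntegrable u MeasureTheory.volume a b :=
    ContinuousOn.intervalIntegrable_of_Icc hab fun t ht => (hu t ht).continuousWithinAt
  have hlog := integral_eq_log_sub_log_of_hasDerivWithinAt_mul hab hpos
    (intervalIntegrable_const.sub hu_int) fun t ht => (hu t ht).congr_deriv (mul_comm _ _)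
  rw [intervalIntegral.integral_sub intervalIntegrable_const hu_int,
    intervalIntegral.integral_const, smul_eq_mul] at hlog
  rw [intervalIntegral.integral_comp_add_left u a, add_zero, add_sub_cancel]
  linarith

theorem stmt_16_general (d₁ c₁ τ₁ τ₂ T : ℝ)
    (h1 : 0 < τ₁) (h2 : τ₁ < τ₂) (h3 : τ₂ < T)
    (u : ℝ → ℝ) (hpos : ∀ t ∈ Icc (0:ℝ) T, 0 < u t) (hper : u T = u 0)
    (hu1 : ∀ t ∈ Icc (0:ℝ) τ₁, HasDerivWithinAt u (-d₁ * u t) (Icc (0:ℝ) τ₁) t)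
    (hu2 : ∀ t ∈ Icc τ₁ τ₂, HasDerivWithinAt u (u t * (1 - u t)) (Icc τ₁ τ₂) t)
    (hu3 : ∀ t ∈ Icc τ₂ T,
      HasDerivWithinAt u (u t * (1 - u t) - c₁ * u t) (Icc τ₂ T) t) :
    (∫ t in (0:ℝ)..(τ₂ - τ₁), u (τ₁ + t)) + (∫ t in (0:ℝ)..(T - τ₂), u (τ₂ + t))
      = (1 - c₁) * T + c₁ * τ₂ - (1 + d₁) * τ₁ := by
  have phase₁ := log_sub_log_of_hasDerivWithinAt_const_mul h1.le
    (fun t ht => hpos t (Icc_subset_Icc le_rfl (h2.trans h3).le ht)) hu1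
  have phase₂ := integral_eq_of_hasDerivWithinAt_logistic h2.le
    (fun t ht => hpos t (Icc_subset_Icc h1.le h3.le ht)) hu2
  have phase₃ := integral_eq_of_hasDerivWithinAt_logistic (r := 1 - c₁) h3.le
    (fun t ht => hpos t (Icc_subset_Icc (h1.trans h2).le le_rfl ht))
    fun t ht => (hu3 t ht).congr_deriv (by ring)
  rw [phase₂, phase₃, hper]
  linarith

/-- Integral identity for a positive T-periodic solution of the three-season
single-species system: ∫₀^{τ₂-τ₁} u₂*(t) dt + ∫₀^{T-τ₂} u₃*(t) dt
= (1-c₁)T + c₁τ₂ - (1+d₁)τ₁. -/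
theorem stmt_16 (d₁ c₁ τ₁ τ₂ T : ℝ) (hd : 0 < d₁) (hc : 0 < c₁)
    (h1 : 0 < τ₁) (h2 : τ₁ < τ₂) (h3 : τ₂ < T)
    (u : ℝ → ℝ) (hpos : ∀ t ∈ Icc (0:ℝ) T, 0 < u t) (hper : u T = u 0)
    (hu1 : ∀ t ∈ Icc (0:ℝ) τ₁, HasDerivWithinAt u (-d₁ * u t) (Icc (0:ℝ) τ₁) t)
    (hu2 : ∀ t ∈ Icc τ₁ τ₂, HasDerivWithinAt u (u t * (1 - u t)) (Icc τ₁ τ₂) t)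
    (hu3 : ∀ t ∈ Icc τ₂ T,
      HasDerivWithinAt u (u t * (1 - u t) - c₁ * u t) (Icc τ₂ T) t) :
    (∫ t in (0:ℝ)..(τ₂ - τ₁), u (τ₁ + t)) + (∫ t in (0:ℝ)..(T - τ₂), u (τ₂ + t))
      = (1 - c₁) * T + c₁ * τ₂ - (1 + d₁) * τ₁ :=
  stmt_16_general d₁ c₁ τ₁ τ₂ T h1 h2 h3 u hpos hper hu1 hu2 hu3
end

section
/- Eigenvalue formula at the semi-trivial periodic solution: under the integral identity ∫₀^{τ₂-τ₁}u₂* + ∫₀^{T-τ₂}u₃* = (1-c₁)T + c₁τ₂ - (1+d₁)τ₁, the Floquet multiplier λ₂ = e^{-d₂τ₁}·e^{∫₀^{τ₂-τ₁} r(1-b₂u₂*(t))dt}·e^{∫₀^{T-τ₂}(r(1-b₂u₃*(t))-c₂)dt} equals e^{c₂(τ₂-τ₂**) - r b₂ c₁(τ₂-τ₂*)}, where τ₂* = ((d₁+1)τ₁+(c₁-1)T)/c₁ and τ₂** = ((d₂+r)τ₁+(c₂-r)T)/c₂. In particular λ₂ < 1 if and only if c₂(τ₂-τ₂**) < r b₂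 c₁(τ₂-τ₂*). -/
open Real Set

/-
Every integrand is affine in u₂* or u₃*, so log λ₂ is affine in the sum of the two
integrals of u₂*, u₃*. The integral identity replaces that sum by an explicit linear
expression in τ₁, τ₂, T, and what remains is linear algebra; λ₂ < 1 iff log λ₂ < 0.
-/

theorem intervalIntegral.integral_const_sub_mul {f : ℝ → ℝ} {a b : ℝ}
    (hf : IntervalIntegrable f MeasureTheory.volume a b) (c k : ℝ) :
    ∫ x in a..b, (c - k * f x) = (b - a) * c - k * ∫ x in a..b, f x := by
  rw [intervalIntegral.integral_sub intervalIntegrable_const (hf.const_mul k),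
    intervalIntegral.integral_const, intervalIntegral.integral_const_mul, smul_eq_mul]

lemma floquet_exponent_eq {d₁ d₂ c₁ c₂ r b₂ τ₁ τ₂ T I₂ I₃ : ℝ}
    (hc₁ : c₁ ≠ 0) (hc₂ : c₂ ≠ 0)
    (hid : I₂ + I₃ = (1 - c₁) * T + c₁ * τ₂ - (1 + d₁) * τ₁) :
    -d₂ * τ₁ + (((τ₂ - τ₁) * r - r * b₂ * I₂)
        + ((T - τ₂) * (r - c₂) - r * b₂ * I₃))
      = c₂ * (τ₂ - ((d₂ + r) * τ₁ + (c₂ - r) * T) / c₂)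
          - r * b₂ * c₁ * (τ₂ - ((d₁ + 1) * τ₁ + (c₁ - 1) * T) / c₁) := by
  rw [mul_sub c₂, mul_div_cancel₀ _ hc₂, mul_assoc (r * b₂) c₁, mul_sub c₁,
    mul_div_cancel₀ _ hc₁]
  linear_combination (-(r * b₂)) * hid

theorem stmt_17_general (d₁ d₂ c₁ c₂ r b₂ τ₁ τ₂ T : ℝ)
    (hc₁ : 0 < c₁) (hc₂ : 0 < c₂)
    (h2 : τ₁ < τ₂) (h3 : τ₂ < T)
    (u₂ u₃ : ℝ → ℝ)
    (hcu₂ : ContinuousOn u₂ (Icc 0 (τ₂ - τ₁)))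
    (hcu₃ : ContinuousOn u₃ (Icc 0 (T - τ₂)))
    (hid : (∫ t in (0:ℝ)..(τ₂ - τ₁), u₂ t) + (∫ t in (0:ℝ)..(T - τ₂), u₃ t)
      = (1 - c₁) * T + c₁ * τ₂ - (1 + d₁) * τ₁) :
    Real.exp (-d₂ * τ₁) * Real.exp (∫ t in (0:ℝ)..(τ₂ - τ₁), r * (1 - b₂ * u₂ t)) *
        Real.exp (∫ t in (0:ℝ)..(T - τ₂), (r * (1 - b₂ * u₃ t) - c₂))
      = Real.exp (c₂ * (τ₂ - ((d₂ + r) * τ₁ + (c₂ - r) * T) / c₂)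
          - r * b₂ * c₁ * (τ₂ - ((d₁ + 1) * τ₁ + (c₁ - 1) * T) / c₁)) ∧
    (Real.exp (-d₂ * τ₁) * Real.exp (∫ t in (0:ℝ)..(τ₂ - τ₁), r * (1 - b₂ * u₂ t)) *
        Real.exp (∫ t in (0:ℝ)..(T - τ₂), (r * (1 - b₂ * u₃ t) - c₂)) < 1 ↔
      c₂ * (τ₂ - ((d₂ + r) * τ₁ + (c₂ - r) * T) / c₂)
        < r * b₂ * c₁ * (τ₂ - ((d₁ + 1) * τ₁ + (c₁ - 1) * T) / c₁)) := by
  have hI₂ : IntervalIntegrable u₂ MeasureTheory.volume 0 (τ₂ - τ₁) :=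
    hcu₂.intervalIntegrable_of_Icc (sub_nonneg.mpr h2.le)
  have hI₃ : IntervalIntegrable u₃ MeasureTheory.volume 0 (T - τ₂) :=
    hcu₃.intervalIntegrable_of_Icc (sub_nonneg.mpr h3.le)
  have e₂ : ∫ t in (0:ℝ)..(τ₂ - τ₁), r * (1 - b₂ * u₂ t)
      = (τ₂ - τ₁) * r - r * b₂ * ∫ t in (0:ℝ)..(τ₂ - τ₁), u₂ t := by
    calc _ = ∫ t in (0:ℝ)..(τ₂ - τ₁), (r - r * b₂ * u₂ t) :=
        intervalIntegral.integral_congr fun t _ => by ring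
      _ = _ := by rw [intervalIntegral.integral_const_sub_mul hI₂, sub_zero]
  have e₃ : ∫ t in (0:ℝ)..(T - τ₂), (r * (1 - b₂ * u₃ t) - c₂)
      = (T - τ₂) * (r - c₂) - r * b₂ * ∫ t in (0:ℝ)..(T - τ₂), u₃ t := by
    calc _ = ∫ t in (0:ℝ)..(T - τ₂), ((r - c₂) - r * b₂ * u₃ t) :=
        intervalIntegral.integral_congr fun t _ => by ring
      _ = _ := by rw [intervalIntegral.integral_const_sub_mul hI₃, sub_zero]
  rw [← Real.exp_add, ← Real.exp_add, add_assoc, e₂, e₃,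
    floquet_exponent_eq hc₁.ne' hc₂.ne' hid]
  exact ⟨rfl, Real.exp_lt_one_iff.trans sub_neg⟩

/-- Floquet multiplier formula at the semi-trivial periodic solution: under the
integral identity for u₂*, u₃*, the multiplier
λ₂ = e^{-d₂τ₁}·e^{∫r(1-b₂u₂*)}·e^{∫(r(1-b₂u₃*)-c₂)} equals
e^{c₂(τ₂-τ₂**) - r b₂ c₁ (τ₂-τ₂*)}, and λ₂ < 1 iff c₂(τ₂-τ₂**) < r b₂ c₁ (τ₂-τ₂*). -/
theorem stmt_17 (d₁ d₂ c₁ c₂ r b₂ τ₁ τ₂ T : ℝ)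
    (hd₁ : 0 < d₁) (hd₂ : 0 < d₂) (hc₁ : 0 < c₁) (hc₂ : 0 < c₂)
    (hr : 0 < r) (hb₂ : 0 < b₂) (h1 : 0 < τ₁) (h2 : τ₁ < τ₂) (h3 : τ₂ < T)
    (u₂ u₃ : ℝ → ℝ)
    (hcu₂ : ContinuousOn u₂ (Icc 0 (τ₂ - τ₁)))
    (hcu₃ : ContinuousOn u₃ (Icc 0 (T - τ₂)))
    (hid : (∫ t in (0:ℝ)..(τ₂ - τ₁), u₂ t) + (∫ t in (0:ℝ)..(T - τ₂), u₃ t)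
      = (1 - c₁) * T + c₁ * τ₂ - (1 + d₁) * τ₁) :
    Real.exp (-d₂ * τ₁) * Real.exp (∫ t in (0:ℝ)..(τ₂ - τ₁), r * (1 - b₂ * u₂ t)) *
        Real.exp (∫ t in (0:ℝ)..(T - τ₂), (r * (1 - b₂ * u₃ t) - c₂))
      = Real.exp (c₂ * (τ₂ - ((d₂ + r) * τ₁ + (c₂ - r) * T) / c₂)
          - r * b₂ * c₁ * (τ₂ - ((d₁ + 1) * τ₁ + (c₁ - 1) * T) / c₁)) ∧
    (Real.exp (-d₂ * τ₁) * Real.exp (∫ t in (0:ℝ)..(τ₂ - τ₁), r * (1 - b₂ * u₂ t)) *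
        Real.exp (∫ t in (0:ℝ)..(T - τ₂), (r * (1 - b₂ * u₃ t) - c₂)) < 1 ↔
      c₂ * (τ₂ - ((d₂ + r) * τ₁ + (c₂ - r) * T) / c₂)
        < r * b₂ * c₁ * (τ₂ - ((d₁ + 1) * τ₁ + (c₁ - 1) * T) / c₁)) :=
  stmt_17_general d₁ d₂ c₁ c₂ r b₂ τ₁ τ₂ T hc₁ hc₂ h2 h3 u₂ u₃ hcu₂ hcu₃ hid
end

section
/- Nonexistence of interior periodic solutions when τ₂ < τ₂**: if (ū, v̄) is a positive T-periodic solution of the two-species seasonal system, then summing the logarithmic-derivative integrals of the v-equation over the three seasons yields ∫₀^{τ₂-τ₁} r(v̄₂ + b₂ū₂) dt + ∫₀^{T-τ₂} r(v̄₃ + b₂ū₃) dt = c₂(τ₂ - τ₂**), where τ₂** = ((d₂+r)τ₁+(c₂-r)T)/c₂. Consequently, if τ₂ < τ₂** then no positive T-periodic solution exists (since the left side is positive). -/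
/-!
Along a positive solution, `(log v)' = v'/v` is the per-capita growth rate of `v`, so integrating
it over a full period gives `log v(T) - log v(0) = 0`. In winter this rate is `-d₂`, and in the
two growing seasons it is `r - c - r (v + b₂ u)` with `c = 0` resp. `c = c₂`. Hence the integrals
of `r (v + b₂ u)` over the growing seasons add up to `r (T - τ₁) - c₂ (T - τ₂) - d₂ τ₁`, which is
the claimed `c₂ (τ₂ - τ₂**)`; it is positive because the integrands are.
-/

open Real Set MeasureTheory

theorem integral_eq_log_sub_log_of_hasDerivWithinAt {v G : ℝ → ℝ} {a b : ℝ} (hab : a ≤ b)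
    (hv : ∀ t ∈ Icc a b, 0 < v t) (hG : IntervalIntegrable G volume a b)
    (hd : ∀ t ∈ Icc a b, HasDerivWithinAt v (G t * v t) (Icc a b) t) :
    ∫ t in a..b, G t = log (v b) - log (v a) := by
  have hlog_cont : ContinuousOn (fun t => log (v t)) (Icc a b) :=
    ContinuousOn.log (fun t ht => (hd t ht).continuousWithinAt) fun t ht => (hv t ht).ne'
  refine intervalIntegral.integral_eq_sub_of_hasDeriv_right_of_le hab hlog_cont
    (fun t ht => ?_) hG
  have hvt := hv t (Ioo_subset_Icc_self ht)
  have hlog := ((hd t (Ioo_subset_Icc_self ht)).hasDerivAt (Icc_mem_nhds ht.1 ht.2)).log hvt.ne'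
  rw [mul_div_cancel_right₀ _ hvt.ne'] at hlog
  exact hlog.hasDerivWithinAt

section Competition

variable {u v : ℝ → ℝ} {r β c a b : ℝ}

theorem integral_competition_eq (hab : a ≤ b) (hv : ∀ t ∈ Icc a b, 0 < v t)
    (hu : ContinuousOn u (Icc a b))
    (hd : ∀ t ∈ Icc a b,
      HasDerivWithinAt v (r * v t * (1 - v t - β * u t) - c * v t) (Icc a b) t) :
    ∫ t in a..b, r * (v t + β * u t) = (r - c) * (b - a) - (log (v b) - log (v a)) := by
  have hvc : ContinuousOn v (Icc a b) := fun t ht => (hd t ht).continuousWithinAt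
  have hint : IntervalIntegrable (fun t => r * (v t + β * u t)) volume a b :=
    (continuousOn_const.mul (hvc.add (continuousOn_const.mul hu))).intervalIntegrable_of_Icc hab
  have hrate : ∫ t in a..b, ((r - c) - r * (v t + β * u t)) = log (v b) - log (v a) :=
    integral_eq_log_sub_log_of_hasDerivWithinAt hab hv (intervalIntegrable_const.sub hint)
      fun t ht => by convert hd t ht using 1; ring
  rw [intervalIntegral.integral_sub intervalIntegrable_const hint,
    intervalIntegral.integral_const, smul_eq_mul] at hrate
  linarith

theorem integral_competition_pos (hab : a < b) (hr : 0 < r) (hβ : 0 ≤ β)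
    (hu : ContinuousOn u (Icc a b)) (hv : ContinuousOn v (Icc a b))
    (hupos : ∀ t ∈ Icc a b, 0 ≤ u t) (hvpos : ∀ t ∈ Icc a b, 0 < v t) :
    0 < ∫ t in a..b, r * (v t + β * u t) := by
  refine intervalIntegral.intervalIntegral_pos_of_pos_on
    ((continuousOn_const.mul (hv.add (continuousOn_const.mul hu))).intervalIntegrable_of_Icc
      hab.le) (fun t ht => ?_) hab
  have := hupos t (Ioo_subset_Icc_self ht)
  have := hvpos t (Ioo_subset_Icc_self ht)
  positivity

end Competition

theorem stmt_18_general (d₂ r b₁ b₂ c₁ c₂ τ₁ τ₂ T : ℝ)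
    (hr : 0 < r) (hb₂ : 0 < b₂) (hc₂ : 0 < c₂) (h1 : 0 < τ₁) (h2 : τ₁ < τ₂) (h3 : τ₂ < T)
    (u v : ℝ → ℝ)
    (hupos : ∀ t ∈ Icc (0:ℝ) T, 0 < u t) (hvpos : ∀ t ∈ Icc (0:ℝ) T, 0 < v t)
    (hvper : v T = v 0)
    (hv1 : ∀ t ∈ Icc (0:ℝ) τ₁, HasDerivWithinAt v (-d₂ * v t) (Icc (0:ℝ) τ₁) t)
    (hu2 : ∀ t ∈ Icc τ₁ τ₂,
      HasDerivWithinAt u (u t * (1 - u t - b₁ * v t)) (Icc τ₁ τ₂) t)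
    (hv2 : ∀ t ∈ Icc τ₁ τ₂,
      HasDerivWithinAt v (r * v t * (1 - v t - b₂ * u t)) (Icc τ₁ τ₂) t)
    (hu3 : ∀ t ∈ Icc τ₂ T,
      HasDerivWithinAt u (u t * (1 - u t - b₁ * v t) - c₁ * u t) (Icc τ₂ T) t)
    (hv3 : ∀ t ∈ Icc τ₂ T,
      HasDerivWithinAt v (r * v t * (1 - v t - b₂ * u t) - c₂ * v t) (Icc τ₂ T) t) :
    (∫ t in (0:ℝ)..(τ₂ - τ₁), r * (v (τ₁ + t) + b₂ * u (τ₁ + t))) +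
        (∫ t in (0:ℝ)..(T - τ₂), r * (v (τ₂ + t) + b₂ * u (τ₂ + t)))
      = c₂ * (τ₂ - ((d₂ + r) * τ₁ + (c₂ - r) * T) / c₂) ∧
    ((d₂ + r) * τ₁ + (c₂ - r) * T) / c₂ < τ₂ := by
  have hsub₁ : Icc 0 τ₁ ⊆ Icc 0 T := Icc_subset_Icc le_rfl (by linarith)
  have hsub₂ : Icc τ₁ τ₂ ⊆ Icc 0 T := Icc_subset_Icc h1.le h3.le
  have hsub₃ : Icc τ₂ T ⊆ Icc 0 T := Icc_subset_Icc (by linarith) le_rfl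
  have hwinter : ∫ _ in (0:ℝ)..τ₁, -d₂ = log (v τ₁) - log (v 0) :=
    integral_eq_log_sub_log_of_hasDerivWithinAt h1.le (fun t ht => hvpos t (hsub₁ ht))
      intervalIntegrable_const hv1
  have hspring := integral_competition_eq (c := 0) h2.le (fun t ht => hvpos t (hsub₂ ht))
    (fun t ht => (hu2 t ht).continuousWithinAt) (by simpa using hv2)
  have hsummer := integral_competition_eq h3.le (fun t ht => hvpos t (hsub₃ ht))
    (fun t ht => (hu3 t ht).continuousWithinAt) hv3
  have hpos₂ := integral_competition_pos h2 hr hb₂.le (fun t ht => (hu2 t ht).continuousWithinAt)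
    (fun t ht => (hv2 t ht).continuousWithinAt) (fun t ht => (hupos t (hsub₂ ht)).le)
    (fun t ht => hvpos t (hsub₂ ht))
  have hpos₃ := integral_competition_pos h3 hr hb₂.le (fun t ht => (hu3 t ht).continuousWithinAt)
    (fun t ht => (hv3 t ht).continuousWithinAt) (fun t ht => (hupos t (hsub₃ ht)).le)
    (fun t ht => hvpos t (hsub₃ ht))
  simp only [intervalIntegral.integral_comp_add_left (fun t => r * (v t + b₂ * u t)), add_zero,
    add_sub_cancel]
  rw [intervalIntegral.integral_const, smul_eq_mul] at hwinter
  rw [hvper] at hsummer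
  have hτ₂ : c₂ * (τ₂ - ((d₂ + r) * τ₁ + (c₂ - r) * T) / c₂)
      = c₂ * τ₂ - ((d₂ + r) * τ₁ + (c₂ - r) * T) := by
    field_simp
  refine ⟨by rw [hτ₂]; linarith, ?_⟩
  rw [div_lt_iff₀ hc₂]
  linarith

/-- If (ū, v̄) is a positive T-periodic solution of the two-species seasonal
system, then ∫₀^{τ₂-τ₁} r(v̄₂+b₂ū₂) + ∫₀^{T-τ₂} r(v̄₃+b₂ū₃) = c₂(τ₂-τ₂**);
consequently τ₂ > τ₂**, so if τ₂ < τ₂** no positive T-periodic solution exists. -/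
theorem stmt_18 (d₁ d₂ r b₁ b₂ c₁ c₂ τ₁ τ₂ T : ℝ)
    (hd₁ : 0 < d₁) (hd₂ : 0 < d₂) (hr : 0 < r) (hb₁ : 0 < b₁) (hb₂ : 0 < b₂)
    (hc₁ : 0 < c₁) (hc₂ : 0 < c₂) (h1 : 0 < τ₁) (h2 : τ₁ < τ₂) (h3 : τ₂ < T)
    (u v : ℝ → ℝ)
    (hupos : ∀ t ∈ Icc (0:ℝ) T, 0 < u t) (hvpos : ∀ t ∈ Icc (0:ℝ) T, 0 < v t)
    (huper : u T = u 0) (hvper : v T = v 0)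
    (hu1 : ∀ t ∈ Icc (0:ℝ) τ₁, HasDerivWithinAt u (-d₁ * u t) (Icc (0:ℝ) τ₁) t)
    (hv1 : ∀ t ∈ Icc (0:ℝ) τ₁, HasDerivWithinAt v (-d₂ * v t) (Icc (0:ℝ) τ₁) t)
    (hu2 : ∀ t ∈ Icc τ₁ τ₂,
      HasDerivWithinAt u (u t * (1 - u t - b₁ * v t)) (Icc τ₁ τ₂) t)
    (hv2 : ∀ t ∈ Icc τ₁ τ₂,
      HasDerivWithinAt v (r * v t * (1 - v t - b₂ * u t)) (Icc τ₁ τ₂) t)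
    (hu3 : ∀ t ∈ Icc τ₂ T,
      HasDerivWithinAt u (u t * (1 - u t - b₁ * v t) - c₁ * u t) (Icc τ₂ T) t)
    (hv3 : ∀ t ∈ Icc τ₂ T,
      HasDerivWithinAt v (r * v t * (1 - v t - b₂ * u t) - c₂ * v t) (Icc τ₂ T) t) :
    (∫ t in (0:ℝ)..(τ₂ - τ₁), r * (v (τ₁ + t) + b₂ * u (τ₁ + t))) +
        (∫ t in (0:ℝ)..(T - τ₂), r * (v (τ₂ + t) + b₂ * u (τ₂ + t)))
      = c₂ * (τ₂ - ((d₂ + r) * τ₁ + (c₂ - r) * T) / c₂) ∧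
    ((d₂ + r) * τ₁ + (c₂ - r) * T) / c₂ < τ₂ :=
  stmt_18_general d₂ r b₁ b₂ c₁ c₂ τ₁ τ₂ T hr hb₂ hc₂ h1 h2 h3 u v hupos hvpos hvper hv1 hu2 hv2 hu3
    hv3
end
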